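/- Let (𝓔ₙ⁰)_{n∈ℕ} satisfy hypotheses A₁ and A₃ with 𝓖(𝓔₀⁰) edgeless, let (Mₙ)_{n≥1} satisfy hypotheses B₁, B₂ and B₃, let Ψ = lim Ψₙ and K = ⋂ₙ Eₙ⁰. Then hypothesis B₄ is satisfied if and only if Ψ⁻¹(K) has empty interior in M. -/

import Mathlib

open Set Function MeasureTheory Topology Filter

noncomputable section

variable {M : Type*}

section Defs
variable [TopologicalSpace M]

/-- A rectangle of `M`: a subset homeomorphic to the closed unit ball of `ℝ^d`. -/
def IsRectangle (d : ℕ) (X : Set M) : Prop :=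
  Nonempty (X ≃ₜ (Metric.closedBall (0 : EuclideanSpace ℝ (Fin d)) 1 :
    Set (EuclideanSpace ℝ (Fin d))))

/-- A collection of rectangles: a finite family of pairwise disjoint rectangles. -/
def IsRectCollection (d : ℕ) (𝓔 : Set (Set M)) : Prop :=
  𝓔.Finite ∧ (∀ X ∈ 𝓔, IsRectangle d X) ∧ 𝓔.Pairwise Disjoint

/-- The union `E` of the rectangles of a collection `𝓔`. -/
def collUnion (𝓔 : Set (Set M)) : Set M := ⋃₀ 𝓔

/-- The collection `𝓔ⁿ = ⋃_{|k| ≤ n} R^k(𝓔)`. -/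
def iterColl (R : M ≃ₜ M) (𝓔 : Set (Set M)) (n : ℕ) : Set (Set M) :=
  {Y | ∃ k : ℤ, |k| ≤ (n : ℤ) ∧ ∃ X ∈ 𝓔, Y = (R.toEquiv ^ k) '' X}

/-- `𝓔` is `p` times iterable. -/
def IterableColl (R : M ≃ₜ M) (𝓔 : Set (Set M)) (p : ℕ) : Prop :=
  ∀ X ∈ 𝓔, ∀ X' ∈ 𝓔, ∀ k l : ℤ, |k| ≤ (p : ℤ) → |l| ≤ (p : ℤ) →
    Disjoint ((R.toEquiv ^ k) '' X) ((R.toEquiv ^ l) '' X') ∨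
      (R.toEquiv ^ k) '' X = (R.toEquiv ^ l) '' X'

/-- The oriented graph `𝓖(𝓔)` (vertices the elements of `𝓔`, an edge from `X` to `R(X)`)
has no cycle. -/
def HasNoCycle (R : M ≃ₜ M) (𝓔 : Set (Set M)) : Prop :=
  ¬ ∃ (X : Set M) (p : ℕ), X ∈ 𝓔 ∧ 1 ≤ p ∧
      (∀ i : ℕ, i ≤ p → (R.toEquiv ^ (i : ℤ)) '' X ∈ 𝓔) ∧ (R.toEquiv ^ (p : ℤ)) '' X = X

/-- The oriented graph `𝓖(𝓔)` has no edge. -/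
def EdgelessGraph (R : M ≃ₜ M) (𝓔 : Set (Set M)) : Prop :=
  ∀ X ∈ 𝓔, (R : M → M) '' X ∉ 𝓔

/-- `𝓕` refines `𝓔`. -/
def Refines (𝓕 𝓔 : Set (Set M)) : Prop :=
  (∀ X ∈ 𝓔, ∃ Y ∈ 𝓕, Y ⊆ X) ∧
    ∀ X ∈ 𝓔, ∀ Y ∈ 𝓕, Disjoint X Y ∨ Y ⊆ interior X

/-- `𝓕` is compatible with `𝓔` for `p` iterates. -/
def CompatibleFor (R : M ≃ₜ M) (𝓕 𝓔 : Set (Set M)) (p : ℕ) : Prop :=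
  collUnion 𝓕 ⊆ collUnion 𝓔 ∧
    ∀ k : ℤ, |k| ≤ 2 * (p : ℤ) + 1 →
      (R.toEquiv ^ k) '' collUnion 𝓕 ∩ collUnion 𝓔 ⊆ collUnion 𝓕

/-- Hypothesis A₁. -/
def HypA1 (R : M ≃ₜ M) (𝓔 : ℕ → Set (Set M)) : Prop :=
  (∀ n, IterableColl R (𝓔 n) (n + 1) ∧ HasNoCycle R (iterColl R (𝓔 n) n)) ∧
  (∀ m n, m < n → Refines (iterColl R (𝓔 n) (n + 1)) (iterColl R (𝓔 m) (m + 1))) ∧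
  (∀ n, CompatibleFor R (𝓔 (n + 1)) (𝓔 n) (n + 1))

/-- Hypothesis A₂ (no isolated point). -/
def HypA2 (𝓔 : ℕ → Set (Set M)) : Prop :=
  ∀ n, ∀ X ∈ 𝓔 n, ∃ Y ∈ 𝓔 (n + 1), ∃ Z ∈ 𝓔 (n + 1), Y ≠ Z ∧ Y ⊆ X ∧ Z ⊆ X

/-- The set `K = ⋂ₙ Eₙ⁰`. -/
def limitK (𝓔 : ℕ → Set (Set M)) : Set M := ⋂ n, collUnion (𝓔 n)

/-- `Ψₙ = Mₙ ∘ ⋯ ∘ M₁`, `Ψ₀ = id`. -/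
def Psi (Mseq : ℕ → M ≃ₜ M) : ℕ → M ≃ₜ M
  | 0 => Homeomorph.refl M
  | n + 1 => (Psi Mseq n).trans (Mseq (n + 1))

/-- `gₙ = Ψₙ⁻¹ ∘ R ∘ Ψₙ`. -/
def gSeq (R : M ≃ₜ M) (Mseq : ℕ → M ≃ₜ M) (n : ℕ) : M ≃ₜ M :=
  ((Psi Mseq n).trans R).trans (Psi Mseq n).symm

/-- The support of a homeomorphism. -/
def homeoSupport (f : M ≃ₜ M) : Set M := closure {x | f x ≠ x}

/-- Hypothesis B₁ (support). -/
def HypB1 (R : M ≃ₜ M) (𝓔 : ℕ → Set (Set M)) (Mseq : ℕ → M ≃ₜ M) : Prop :=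
  ∀ n : ℕ, homeoSupport (Mseq (n + 1)) ⊆ collUnion (iterColl R (𝓔 n) n)

/-- Hypothesis B₂ (commutation). -/
def HypB2 (R : M ≃ₜ M) (𝓔 : ℕ → Set (Set M)) (Mseq : ℕ → M ≃ₜ M) : Prop :=
  ∀ n : ℕ, ∀ X ∈ iterColl R (𝓔 n) n, (R : M → M) '' X ∈ iterColl R (𝓔 n) n →
    ∀ x ∈ X, Mseq (n + 1) (R x) = R (Mseq (n + 1) x)

end Defs

section MetricDefs
variable [MetricSpace M]

/-- Hypothesis A₃ (decay of the collections of rectangles). -/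
def HypA3 (R : M ≃ₜ M) (𝓔 : ℕ → Set (Set M)) : Prop :=
  ∀ ε : ℝ, 0 < ε → ∃ N : ℕ, ∀ n ≥ N, ∀ X ∈ iterColl R (𝓔 n) n, Metric.diam X ≤ ε

/-- Hypothesis B₃ (convergence). -/
def HypB3 (R : M ≃ₜ M) (𝓔 : ℕ → Set (Set M)) (Mseq : ℕ → M ≃ₜ M) : Prop :=
  ∀ ε : ℝ, 0 < ε → ∃ N : ℕ, ∀ n ≥ N,
    ∀ X ∈ iterColl R (𝓔 (n + 1)) (n + 2) \ iterColl R (𝓔 (n + 1)) n,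
      Metric.diam ((Psi Mseq n) ⁻¹' X) ≤ ε

/-- Hypothesis B₄ (fibres are thin): the internal radius of `Ψₙ⁻¹(Eₙ⁰)` tends to `0`. -/
def HypB4 (𝓔 : ℕ → Set (Set M)) (Mseq : ℕ → M ≃ₜ M) : Prop :=
  ∀ ε : ℝ, 0 < ε → ∃ N : ℕ, ∀ n ≥ N, ∀ (x : M) (r : ℝ),
    Metric.ball x r ⊆ (Psi Mseq n) ⁻¹' collUnion (𝓔 n) → r ≤ ε

end MetricDefs

section TopDefs
variable [TopologicalSpace M]

/-- A Cantor set in `M`. -/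
def IsCantorSet (K : Set M) : Prop :=
  K.Nonempty ∧ IsCompact K ∧ Perfect K ∧ IsTotallyDisconnected K

/-- A totally disconnected compact set is tamely embedded if it admits arbitrarily small
neighbourhoods that are finite unions of pairwise disjoint rectangles. -/
def TamelyEmbedded (d : ℕ) (Q : Set M) : Prop :=
  ∀ U : Set M, IsOpen U → Q ⊆ U →
    ∃ 𝓑 : Set (Set M), IsRectCollection d 𝓑 ∧ Q ⊆ interior (collUnion 𝓑) ∧ collUnion 𝓑 ⊆ U

/-- A Cantor set is dynamically coherent for `R`. -/
def DynamicallyCoherent (R : M ≃ₜ M) (K : Set M) : Prop :=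
  (∀ k : ℤ, ∃ U : Set M, IsOpen U ∧ (R.toEquiv ^ k) '' K ∩ K = U ∩ K) ∧
  ∀ p : ℕ, ∀ x ∈ K,
    (∃ k : ℕ, 1 ≤ k ∧ ∀ i : ℕ, k ≤ i → i ≤ k + p → (R.toEquiv ^ (i : ℤ)) x ∉ K) ∧
    (∃ l : ℕ, 1 ≤ l ∧ ∀ i : ℕ, l ≤ i → i ≤ l + p → (R.toEquiv ^ (-(i : ℤ))) x ∉ K)

/-- A Cantor set is dynamically meagre for `R`: it has empty interior in
`Λ = Cl(⋃ᵢ Rⁱ(K))`. -/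
def DynamicallyMeagre (R : M ≃ₜ M) (K : Set M) : Prop :=
  ∀ U : Set M, IsOpen U → U ∩ closure (⋃ i : ℤ, (R.toEquiv ^ i) '' K) ⊆ K →
    U ∩ closure (⋃ i : ℤ, (R.toEquiv ^ i) '' K) = ∅

/-- `R` is minimal on the invariant set `Λ` (every orbit of a point of `Λ` is dense in `Λ`). -/
def MinimalOnSet (R : M ≃ₜ M) (Λ : Set M) : Prop :=
  ∀ x ∈ Λ, Λ ⊆ closure (Set.range fun n : ℤ => (R.toEquiv ^ n) x)

/-- `R` is transitive on the invariant set `Λ` (some orbit is dense in `Λ`). -/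
def TransitiveOnSet (R : M ≃ₜ M) (Λ : Set M) : Prop :=
  ∃ x ∈ Λ, Λ ⊆ closure (Set.range fun n : ℤ => (R.toEquiv ^ n) x)

end TopDefs

/-- The support of a measure. -/
def measSupport {M : Type*} [TopologicalSpace M] [MeasurableSpace M] (μ : Measure M) : Set M :=
  {x | ∀ U : Set M, IsOpen U → x ∈ U → 0 < μ U}

/-- The measurable dynamical system `S` restricted to the `S`-invariant set `A` is isomorphic
to the system `T` restricted to the `T`-invariant set `B`, in the sense of Béguin–Crovisier–Le
Roux: there are full invariant subsets `X₀ ⊆ A`, `Y₀ ⊆ B` and a bijective bimeasurable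
conjugacy between them. -/
def MeasIsoOn {X Y : Type*} [MeasurableSpace X] [MeasurableSpace Y]
    (S : X → X) (A : Set X) (T : Y → Y) (B : Set Y) : Prop :=
  ∃ (X₀ : Set X) (Y₀ : Set Y) (Θ : X → Y),
    X₀ ⊆ A ∧ Y₀ ⊆ B ∧ MeasurableSet X₀ ∧ MeasurableSet Y₀ ∧
    S '' X₀ = X₀ ∧ T '' Y₀ = Y₀ ∧
    (∀ μ : Measure X, IsProbabilityMeasure μ → Measure.map S μ = μ → μ A = 1 → μ X₀ = 1) ∧
    (∀ ν : Measure Y, IsProbabilityMeasure ν → Measure.map T ν = ν → ν B = 1 → ν Y₀ = 1) ∧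
    Set.BijOn Θ X₀ Y₀ ∧
    (∀ V : Set Y, MeasurableSet V → MeasurableSet (X₀ ∩ Θ ⁻¹' V)) ∧
    (∀ U : Set X, MeasurableSet U → MeasurableSet (Θ '' (X₀ ∩ U))) ∧
    (∀ x ∈ X₀, Θ (S x) = T (Θ x))


/-!
Let `K₀` be such that no rectangle of `𝓔ₖᵏ`, `k ≥ K₀`, is clopen (they are small, while the
components of `M` are open and not reduced to points). For `k ≥ n ≥ K₀` the homeomorphism `Mₖ₊₁`
fixes the frontier of each rectangle `Y` of `𝓔ₖᵏ`, so by connectedness it maps `Y` into itself;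
as `Y` lies either inside or outside `Eₙ⁰`, `Mₖ₊₁` preserves `Eₙ⁰`. Hence
`Ψₘ⁻¹(Eₙ⁰) = Ψₙ⁻¹(Eₙ⁰)` for `m ≥ n ≥ K₀`, the sets `Fₙ = Ψₙ⁻¹(Eₙ⁰)` decrease, and
`Ψ⁻¹(K) = ⋂ Fₙ` because `K ⊆ int Eₙ⁰` and `Eₙ⁰` is closed. In a compact metric space, balls of a
fixed radius inside the decreasing sets `Fₙ` accumulate to a ball inside all of them, so the
internal radius of `Fₙ` tends to `0` iff `⋂ Fₙ` has empty interior.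

In dimension `0` the space is finite, `R` has finite order, and the absence of cycles forces
every `𝓔ₙ⁰` to be empty.
-/

open Metric

section InternalRadius

variable {X : Type*} [MetricSpace X]

def InternalRadiusTendstoZero (F : ℕ → Set X) : Prop :=
  ∀ ε : ℝ, 0 < ε → ∃ N : ℕ, ∀ n ≥ N, ∀ (x : X) (r : ℝ), ball x r ⊆ F n → r ≤ ε

theorem internalRadiusTendstoZero_comp_add_iff {F : ℕ → Set X} (k : ℕ) :
    InternalRadiusTendstoZero (fun n ↦ F (n + k)) ↔ InternalRadiusTendstoZero F := by
  refine forall₂_congr fun ε _ ↦ ⟨fun ⟨N, hN⟩ ↦ ⟨N + k, fun n hn ↦ ?_⟩,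
    fun ⟨N, hN⟩ ↦ ⟨N, fun n hn ↦ hN (n + k) (by omega)⟩⟩
  simpa [Nat.sub_add_cancel (le_of_add_le_right hn)] using hN (n - k) (by omega)

theorem internalRadiusTendstoZero_iff_interior_iInter_eq_empty [CompactSpace X] {F : ℕ → Set X}
    (hF : Antitone F) : InternalRadiusTendstoZero F ↔ interior (⋂ n, F n) = ∅ := by
  constructor
  · refine fun h ↦ eq_empty_of_forall_notMem fun x hx ↦ ?_
    obtain ⟨r, hr, hball⟩ := Metric.isOpen_iff.mp isOpen_interior x hx
    obtain ⟨N, hN⟩ := h (r / 2) (half_pos hr)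
    have := hN N le_rfl x r ((hball.trans interior_subset).trans (iInter_subset F N))
    linarith
  · intro h
    by_contra hne
    simp only [InternalRadiusTendstoZero, not_forall, not_exists, not_le] at hne
    obtain ⟨ε, hε, hfreq⟩ := hne
    -- by monotonicity a ball of radius `ε` fits in every `F n`, not only in infinitely many
    have hball : ∀ n, ∃ x, ball x ε ⊆ F n := fun n ↦ by
      obtain ⟨m, hm, x, r, hsub, hr⟩ := hfreq n
      exact ⟨x, (ball_subset_ball hr.le).trans (hsub.trans (hF hm))⟩
    choose x hx using hball
    obtain ⟨a, -, ha⟩ := isCompact_univ.exists_mapClusterPt (f := atTop) (u := x)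
      (by simp)
    have hsub : ball a (ε / 2) ⊆ ⋂ n, F n := fun y hy ↦ mem_iInter.mpr fun n ↦ by
      obtain ⟨m, hm, hxm⟩ := frequently_atTop.mp
        (mapClusterPt_iff_frequently.mp ha _ (ball_mem_nhds a (half_pos hε))) n
      refine hF hm (hx m ?_)
      rw [mem_ball] at hy hxm ⊢
      linarith [dist_triangle_right y (x m) a]
    exact (h ▸ interior_maximal hsub isOpen_ball) (mem_ball_self (half_pos hε))

end InternalRadius

section Topology

variable {X : Type*} [TopologicalSpace X]

theorem Homeomorph.toEquiv_zpow (R : X ≃ₜ X) (k : ℤ) : (R ^ k).toEquiv = R.toEquiv ^ k :=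
  map_zpow (MonoidHom.mk' (fun f : X ≃ₜ X ↦ f.toEquiv) fun _ _ ↦ rfl) R k

theorem Homeomorph.continuous_toEquiv_zpow (R : X ≃ₜ X) (k : ℤ) :
    Continuous ⇑(R.toEquiv ^ k) := by
  rw [← R.toEquiv_zpow]
  exact (R ^ k).continuous

theorem IsRectangle.isCompact {d : ℕ} {Y : Set X} (h : IsRectangle d Y) : IsCompact Y := by
  obtain ⟨e⟩ := h
  have := isCompact_iff_compactSpace.mp (isCompact_closedBall (0 : EuclideanSpace ℝ (Fin d)) 1)
  exact isCompact_iff_compactSpace.mpr e.symm.compactSpace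

theorem IsRectangle.isConnected {d : ℕ} {Y : Set X} (h : IsRectangle d Y) : IsConnected Y := by
  obtain ⟨e⟩ := h
  have := isConnected_iff_connectedSpace.mp
    ((convex_closedBall (0 : EuclideanSpace ℝ (Fin d)) 1).isConnected ⟨0, by simp⟩)
  exact isConnected_iff_connectedSpace.mpr (e.connectedSpace_iff.mpr this)

theorem ChartedSpace.perfectSpace {H : Type*} [TopologicalSpace H] [PerfectSpace H]
    [ChartedSpace H X] : PerfectSpace X := by
  refine perfectSpace_iff_forall_not_isolated.mpr fun x ↦ ?_
  rw [Filter.neBot_iff, Ne, ← isOpen_singleton_iff_punctured_nhds]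
  intro hx
  have hsub : {x} ⊆ (chartAt H x).source := singleton_subset_iff.mpr (mem_chart_source H x)
  have := (chartAt H x).isOpen_image_of_subset_source hx hsub
  rw [image_singleton] at this
  exact not_isOpen_singleton _ this

end Topology

theorem exists_pos_le_diam_of_isClopen {X : Type*} [MetricSpace X] [CompactSpace X]
    [LocallyConnectedSpace X] [PerfectSpace X] : ∃ δ > 0, ∀ S : Set X, IsClopen S → S.Nonempty → δ ≤ diam S := by
  have hcont : Continuous fun x : X ↦ diam (connectedComponent x) :=
    ((IsLocallyConstant.iff_eventually_eq _).mpr fun x ↦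
      eventually_of_mem (isOpen_connectedComponent.mem_nhds mem_connectedComponent) fun _ hy ↦
        congrArg diam (connectedComponent_eq hy).symm).continuous
  have hpos : ∀ x : X, 0 < diam (connectedComponent x) := fun x ↦ by
    obtain ⟨z, hz, hzx⟩ := accPt_iff_nhds.mp (PerfectSpace.univ_preperfect x (mem_univ x))
      _ (isOpen_connectedComponent.mem_nhds mem_connectedComponent)
    exact (dist_pos.mpr hzx).trans_le (dist_le_diam_of_mem
      isClosed_connectedComponent.isCompact.isBounded hz.1 mem_connectedComponent)
  obtain ⟨δ, hδ, hle⟩ := isCompact_univ.exists_forall_le' hcont.continuousOn fun x _ ↦ hpos x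
  refine ⟨δ, hδ, fun S hS ⟨x, hx⟩ ↦ (hle x (mem_univ x)).trans ?_⟩
  exact diam_mono (hS.connectedComponent_subset hx) (Bornology.IsBounded.all S)

section FixedOffUnion

variable {X : Type*} [TopologicalSpace X] [T2Space X] {𝓘 : Set (Set X)}

theorem Homeomorph.image_subset_of_eqOn_compl_sUnion (hfin : 𝓘.Finite)
    (hclosed : ∀ Y ∈ 𝓘, IsClosed Y) (hdisj : 𝓘.Pairwise Disjoint) (f : X ≃ₜ X)
    (hf : EqOn f id (⋃₀ 𝓘)ᶜ) {Y : Set X} (hY : Y ∈ 𝓘) (hconn : IsPreconnected Y)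
    (hfr : (frontier Y).Nonempty) : f '' Y ⊆ Y := by
  set Z := ⋃₀ (𝓘 \ {Y})
  have hZ : IsClosed Z := by
    rw [show Z = _ from sUnion_eq_biUnion]
    exact hfin.sdiff.isClosed_biUnion fun Y' hY' ↦ hclosed Y' hY'.1
  have hYZ : Disjoint Y Z := disjoint_sUnion_right.mpr fun Y' hY' ↦ hdisj hY hY'.1 (Ne.symm hY'.2)
  have hE : ⋃₀ 𝓘 = Y ∪ Z := by
    rw [← sUnion_insert, insert_sdiff_singleton, insert_eq_of_mem hY]
  have hfix : ∀ x ∉ interior (⋃₀ 𝓘), f x = x := fun x hx ↦ by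
    rw [← mem_compl_iff, ← closure_compl] at hx
    exact closure_minimal hf (isClosed_eq f.continuous continuous_id) hx
  have hmaps : MapsTo f (⋃₀ 𝓘) (⋃₀ 𝓘) := fun x hx ↦ by
    by_contra h
    exact h (by rwa [f.injective (hf h)])
  obtain ⟨y, hy⟩ := hfr
  have hyY : y ∈ Y := (hclosed Y hY).frontier_subset hy
  -- near `Y` the union coincides with `Y`, so a frontier point of `Y` is not interior to it
  have hyfix : f y = y := hfix y fun hyE ↦ hy.2 <| mem_interior.mpr
    ⟨interior (⋃₀ 𝓘) ∩ Zᶜ, fun z hz ↦ ((hE ▸ interior_subset hz.1) : z ∈ Y ∪ Z).resolve_right hz.2,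
      isOpen_interior.inter hZ.isOpen_compl, hyE, disjoint_left.mp hYZ hyY⟩
  have himage : f '' Y ⊆ Y ∪ Z :=
    hE ▸ (hmaps.mono_left (subset_sUnion_of_mem hY)).image_subset
  rcases isPreconnected_iff_subset_of_disjoint_closed.mp (hconn.image f f.continuous.continuousOn)
    Y Z (hclosed Y hY) hZ himage (by rw [hYZ.inter_eq, inter_empty]) with h | h
  · exact h
  · exact absurd (hyfix ▸ h ⟨y, hyY, rfl⟩) (disjoint_left.mp hYZ hyY)

theorem Homeomorph.preimage_eq_self_of_eqOn_compl_sUnion (hfin : 𝓘.Finite)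
    (hclosed : ∀ Y ∈ 𝓘, IsClosed Y) (hdisj : 𝓘.Pairwise Disjoint)
    (hconn : ∀ Y ∈ 𝓘, IsPreconnected Y) (hfr : ∀ Y ∈ 𝓘, (frontier Y).Nonempty) (f : X ≃ₜ X)
    (hf : EqOn f id (⋃₀ 𝓘)ᶜ) {S : Set X} (hS : ∀ Y ∈ 𝓘, Y ⊆ S ∨ Disjoint Y S) :
    f ⁻¹' S = S := by
  have hmaps : ∀ g : X ≃ₜ X, EqOn g id (⋃₀ 𝓘)ᶜ → MapsTo g S S := by
    intro g hg x hx
    by_cases hxE : x ∈ ⋃₀ 𝓘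
    · obtain ⟨Y, hY, hxY⟩ := hxE
      have hYS : Y ⊆ S := (hS Y hY).resolve_right fun h ↦ disjoint_left.mp h hxY hx
      exact hYS (g.image_subset_of_eqOn_compl_sUnion hfin hclosed hdisj hg hY (hconn Y hY)
        (hfr Y hY) ⟨x, hxY, rfl⟩)
    · exact (hg hxE).symm ▸ hx
  refine Subset.antisymm (fun x hx ↦ ?_) (hmaps f hf)
  simpa using hmaps f.symm (fun x hx ↦ f.symm_apply_eq.mpr (hf hx).symm) hx

end FixedOffUnion

section Collections

variable {X : Type*} [TopologicalSpace X] {R : X ≃ₜ X}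

theorem mem_iterColl_of_mem {𝓔 : Set (Set X)} {n : ℕ} {Y : Set X} (hY : Y ∈ 𝓔) :
    Y ∈ iterColl R 𝓔 n :=
  ⟨0, by simp, Y, hY, by simp⟩

theorem iterColl_mono {𝓔 : Set (Set X)} {m n : ℕ} (h : m ≤ n) :
    iterColl R 𝓔 m ⊆ iterColl R 𝓔 n := by
  rintro Y ⟨k, hk, Y, hY, rfl⟩
  exact ⟨k, hk.trans (by exact_mod_cast h), Y, hY, rfl⟩

theorem Set.Finite.iterColl {𝓔 : Set (Set X)} (h : 𝓔.Finite) (n : ℕ) :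
    (iterColl R 𝓔 n).Finite := by
  refine (((finite_Icc (-(n : ℤ)) n).prod h).image
    fun p : ℤ × Set X ↦ (R.toEquiv ^ p.1) '' p.2).subset ?_
  rintro Y ⟨k, hk, Z, hZ, rfl⟩
  exact ⟨(k, Z), ⟨mem_Icc.mpr (abs_le.mp hk), hZ⟩, rfl⟩

theorem IterableColl.pairwise_disjoint_iterColl {𝓔 : Set (Set X)} {p n : ℕ}
    (h : IterableColl R 𝓔 p) (hn : n ≤ p) : (iterColl R 𝓔 n).Pairwise Disjoint := by
  rintro _ ⟨k, hk, Y, hY, rfl⟩ _ ⟨l, hl, Y', hY', rfl⟩ hne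
  have hnp : (n : ℤ) ≤ p := by exact_mod_cast hn
  exact (h Y hY Y' hY' k l (hk.trans hnp) (hl.trans hnp)).resolve_right hne

theorem isCompact_of_mem_iterColl {d : ℕ} {𝓔 : Set (Set X)} {n : ℕ}
    (hrect : ∀ Y ∈ 𝓔, IsRectangle d Y) {Y : Set X} (hY : Y ∈ iterColl R 𝓔 n) : IsCompact Y := by
  obtain ⟨k, -, Y, hY, rfl⟩ := hY
  exact (hrect Y hY).isCompact.image (R.continuous_toEquiv_zpow k)

theorem isConnected_of_mem_iterColl {d : ℕ} {𝓔 : Set (Set X)} {n : ℕ}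
    (hrect : ∀ Y ∈ 𝓔, IsRectangle d Y) {Y : Set X} (hY : Y ∈ iterColl R 𝓔 n) :
    IsConnected Y := by
  obtain ⟨k, -, Y, hY, rfl⟩ := hY
  exact (hrect Y hY).isConnected.image _ (R.continuous_toEquiv_zpow k).continuousOn

theorem IsRectCollection.isClosed_collUnion [T2Space X] {d : ℕ} {𝓔 : Set (Set X)}
    (h : IsRectCollection d 𝓔) : IsClosed (collUnion 𝓔) := by
  rw [collUnion, sUnion_eq_biUnion]
  exact h.1.isClosed_biUnion fun Y hY ↦ (h.2.1 Y hY).isCompact.isClosed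

theorem HasNoCycle.toEquiv_pow_ne_one {𝓔 : Set (Set X)} {n p : ℕ}
    (h : HasNoCycle R (iterColl R 𝓔 n)) (hne : 𝓔.Nonempty) (hp : 1 ≤ p) (hpn : p ≤ n) :
    R.toEquiv ^ p ≠ 1 := by
  intro hRp
  obtain ⟨Y, hY⟩ := hne
  refine h ⟨Y, p, mem_iterColl_of_mem hY, hp, fun i hi ↦ ⟨i, ?_, Y, hY, rfl⟩, ?_⟩
  · rw [Nat.abs_cast]
    exact_mod_cast hi.trans hpn
  · simp [hRp]

end Collections

section HypothesisA

variable {X : Type*} [TopologicalSpace X] {R : X ≃ₜ X} {𝓔 : ℕ → Set (Set X)}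

theorem HypA1.collUnion_antitone (hA1 : HypA1 R 𝓔) : Antitone fun n ↦ collUnion (𝓔 n) :=
  antitone_nat_of_succ_le fun n ↦ (hA1.2.2 n).1

theorem HypA1.collUnion_succ_subset_interior (hA1 : HypA1 R 𝓔) (n : ℕ) :
    collUnion (𝓔 (n + 1)) ⊆ interior (collUnion (𝓔 n)) := by
  rintro z hz
  obtain ⟨Y, hY, hzY⟩ := hz
  obtain ⟨Z, hZ, hzZ⟩ := (hA1.2.2 n).1 ⟨Y, hY, hzY⟩
  rcases (hA1.2.1 n (n + 1) n.lt_succ_self).2 Z (mem_iterColl_of_mem hZ) Y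
    (mem_iterColl_of_mem hY) with h | h
  · exact absurd hzY (disjoint_left.mp h hzZ)
  · exact interior_mono (subset_sUnion_of_mem hZ) (h hzY)

theorem HypA1.subset_or_disjoint_collUnion (hA1 : HypA1 R 𝓔) {n k : ℕ} (hnk : n ≤ k)
    {Y : Set X} (hY : Y ∈ iterColl R (𝓔 k) k) :
    Y ⊆ collUnion (𝓔 n) ∨ Disjoint Y (collUnion (𝓔 n)) := by
  rw [collUnion, disjoint_sUnion_right]
  refine or_iff_not_imp_right.mpr fun h ↦ ?_
  obtain ⟨Z, hZ, hYZ⟩ := not_forall₂.mp h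
  have : Disjoint Y Z ∨ Y ⊆ Z := by
    rcases hnk.lt_or_eq with hlt | rfl
    · rcases (hA1.2.1 n k hlt).2 Z (mem_iterColl_of_mem hZ) Y (iterColl_mono k.le_succ hY)
        with h | h
      · exact Or.inl h.symm
      · exact Or.inr (h.trans interior_subset)
    · obtain ⟨j, hj, Y₀, hY₀, rfl⟩ := hY
      have := (hA1.1 n).1 Y₀ hY₀ Z hZ j 0 (hj.trans (by omega)) (by positivity)
      simp only [zpow_zero, Equiv.Perm.coe_one, image_id] at this
      exact this.imp_right Eq.subset
  exact (this.resolve_left hYZ).trans (subset_sUnion_of_mem hZ)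

theorem HypA1.eq_empty_of_finite [Finite X] (hA1 : HypA1 R 𝓔) (n : ℕ) : 𝓔 n = ∅ := by
  refine eq_empty_of_forall_notMem fun Y hY ↦ ?_
  set p := orderOf R.toEquiv
  have hp : 0 < p := orderOf_pos R.toEquiv
  obtain ⟨-, ⟨-, -, Z, hZ, -⟩, -⟩ :=
    (hA1.2.1 n (n + p) (by omega)).1 Y (mem_iterColl_of_mem hY)
  exact (hA1.1 (n + p)).2.toEquiv_pow_ne_one ⟨Z, hZ⟩ hp (by omega) (pow_orderOf_eq_one _)

end HypothesisA

theorem HypA3.exists_frontier_nonempty {X : Type*} [MetricSpace X] [CompactSpace X]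
    [LocallyConnectedSpace X] [PerfectSpace X] {d : ℕ} {R : X ≃ₜ X} {𝓔 : ℕ → Set (Set X)}
    (hrect : ∀ n, ∀ Y ∈ 𝓔 n, IsRectangle d Y) (hA3 : HypA3 R 𝓔) :
    ∃ K₀, ∀ k ≥ K₀, ∀ Y ∈ iterColl R (𝓔 k) k, (frontier Y).Nonempty := by
  obtain ⟨δ, hδ, hdiam⟩ := exists_pos_le_diam_of_isClopen (X := X)
  obtain ⟨K₀, hK₀⟩ := hA3 (δ / 2) (half_pos hδ)
  refine ⟨K₀, fun k hk Y hY ↦ nonempty_iff_ne_empty.mpr fun hfr ↦ ?_⟩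
  have := hdiam Y (isClopen_iff_frontier_eq_empty.mpr hfr)
    (isConnected_of_mem_iterColl (hrect k) hY).nonempty
  linarith [hK₀ k hk Y hY]

theorem eqOn_compl_of_homeoSupport_subset {X : Type*} [TopologicalSpace X] {f : X ≃ₜ X}
    {S : Set X} (h : homeoSupport f ⊆ S) : EqOn f id Sᶜ :=
  fun _ hx ↦ by_contra fun hfx ↦ hx (h (subset_closure hfx))

section Conjugacy

variable {X : Type*} [TopologicalSpace X] [T2Space X] {d : ℕ} {R : X ≃ₜ X}
  {𝓔 : ℕ → Set (Set X)} {Mseq : ℕ → X ≃ₜ X}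

theorem preimage_mseq_collUnion (hrect : ∀ n, IsRectCollection d (𝓔 n)) (hA1 : HypA1 R 𝓔)
    (hB1 : HypB1 R 𝓔 Mseq) {n k : ℕ} (hnk : n ≤ k)
    (hfr : ∀ Y ∈ iterColl R (𝓔 k) k, (frontier Y).Nonempty) :
    Mseq (k + 1) ⁻¹' collUnion (𝓔 n) = collUnion (𝓔 n) :=
  (Mseq (k + 1)).preimage_eq_self_of_eqOn_compl_sUnion ((hrect k).1.iterColl k)
    (fun _ hY ↦ (isCompact_of_mem_iterColl (hrect k).2.1 hY).isClosed)
    ((hA1.1 k).1.pairwise_disjoint_iterColl k.le_succ)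
    (fun _ hY ↦ (isConnected_of_mem_iterColl (hrect k).2.1 hY).isPreconnected) hfr
    (eqOn_compl_of_homeoSupport_subset (hB1 k)) fun _ ↦ hA1.subset_or_disjoint_collUnion hnk

theorem preimage_psi_collUnion (hrect : ∀ n, IsRectCollection d (𝓔 n)) (hA1 : HypA1 R 𝓔)
    (hB1 : HypB1 R 𝓔 Mseq) {n m : ℕ}
    (hfr : ∀ k ≥ n, ∀ Y ∈ iterColl R (𝓔 k) k, (frontier Y).Nonempty) (hnm : n ≤ m) :
    Psi Mseq m ⁻¹' collUnion (𝓔 n) = Psi Mseq n ⁻¹' collUnion (𝓔 n) := by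
  induction m, hnm using Nat.le_induction with
  | base => rfl
  | succ m hnm ih =>
    change Psi Mseq m ⁻¹' (Mseq (m + 1) ⁻¹' collUnion (𝓔 n)) = _
    rw [preimage_mseq_collUnion hrect hA1 hB1 hnm (hfr m hnm), ih]

theorem antitone_preimage_psi_collUnion (hrect : ∀ n, IsRectCollection d (𝓔 n))
    (hA1 : HypA1 R 𝓔) (hB1 : HypB1 R 𝓔 Mseq) {K₀ : ℕ}
    (hfr : ∀ k ≥ K₀, ∀ Y ∈ iterColl R (𝓔 k) k, (frontier Y).Nonempty) :
    Antitone fun n ↦ Psi Mseq (n + K₀) ⁻¹' collUnion (𝓔 (n + K₀)) := by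
  refine antitone_nat_of_succ_le fun n ↦ ?_
  rw [← preimage_psi_collUnion hrect hA1 hB1 (fun k hk ↦ hfr k (by omega)) (by omega :
    n + K₀ ≤ n + 1 + K₀)]
  exact preimage_mono (hA1.collUnion_antitone (by omega))

theorem preimage_limitK_eq_iInter (hrect : ∀ n, IsRectCollection d (𝓔 n))
    (hA1 : HypA1 R 𝓔) (hB1 : HypB1 R 𝓔 Mseq) {K₀ : ℕ}
    (hfr : ∀ k ≥ K₀, ∀ Y ∈ iterColl R (𝓔 k) k, (frontier Y).Nonempty) {Ψ : X → X}
    (hΨ : ∀ y, Tendsto (fun n ↦ Psi Mseq n y) atTop (𝓝 (Ψ y))) :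
    Ψ ⁻¹' limitK 𝓔 = ⋂ n, Psi Mseq (n + K₀) ⁻¹' collUnion (𝓔 (n + K₀)) := by
  have hpsi : ∀ n ≥ K₀, ∀ m ≥ n, ∀ y, Psi Mseq m y ∈ collUnion (𝓔 n) ↔
      Psi Mseq n y ∈ collUnion (𝓔 n) := fun n hn m hm y ↦
    Set.ext_iff.mp (preimage_psi_collUnion hrect hA1 hB1 (fun k hk ↦ hfr k (hn.trans hk)) hm) y
  ext y
  simp only [mem_preimage, limitK, mem_iInter]
  constructor
  · intro hy n
    obtain ⟨m, hmE, hm⟩ := (((hΨ y).eventually (isOpen_interior.mem_nhds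
      (hA1.collUnion_succ_subset_interior (n + K₀) (hy _)))).and (eventually_ge_atTop _)).exists
    exact (hpsi _ (by omega) m hm y).mp (interior_subset hmE)
  · intro hy n
    refine hA1.collUnion_antitone (n.le_add_right K₀) ?_
    exact (hrect _).isClosed_collUnion.mem_of_tendsto (hΨ y)
      (eventually_atTop.mpr ⟨n + K₀, fun m hm ↦ (hpsi _ (by omega) m hm y).mpr (hy n)⟩)

end Conjugacy

theorem hypB4_iff_empty_interior_general (d : ℕ) (M : Type*) [MetricSpace M] [CompactSpace M]
    [ChartedSpace (EuclideanSpace ℝ (Fin d)) M]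
    (R : M ≃ₜ M) (𝓔 : ℕ → Set (Set M)) (hrect : ∀ n, IsRectCollection d (𝓔 n))
    (hA1 : HypA1 R 𝓔) (hA3 : HypA3 R 𝓔)
    (Mseq : ℕ → M ≃ₜ M)
    (hB1 : HypB1 R 𝓔 Mseq)
    (Ψ : M → M)
    (hΨ : TendstoUniformly (fun n => ⇑(Psi Mseq n)) Ψ Filter.atTop) :
    HypB4 𝓔 Mseq ↔ interior (Ψ ⁻¹' limitK 𝓔) = ∅ := by
  rcases Nat.eq_zero_or_pos d with rfl | hd
  · have := ChartedSpace.discreteTopology (H := EuclideanSpace ℝ (Fin 0)) (M := M)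
    have : Finite M := finite_of_compact_of_discrete
    simp only [HypB4, limitK, collUnion, hA1.eq_empty_of_finite, sUnion_empty, iInter_const,
      preimage_empty, interior_empty, iff_true, subset_empty_iff, ball_eq_empty]
    exact fun ε hε ↦ ⟨0, fun _ _ _ _ hr ↦ hr.trans hε.le⟩
  have : Nonempty (Fin d) := ⟨⟨0, hd⟩⟩
  have := ChartedSpace.perfectSpace (H := EuclideanSpace ℝ (Fin d)) (X := M)
  have := ChartedSpace.locallyConnectedSpace (EuclideanSpace ℝ (Fin d)) M
  obtain ⟨K₀, hK₀⟩ := hA3.exists_frontier_nonempty fun n ↦ (hrect n).2.1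
  rw [preimage_limitK_eq_iInter hrect hA1 hB1 hK₀ hΨ.tendsto_at,
    ← internalRadiusTendstoZero_iff_interior_iInter_eq_empty
      (antitone_preimage_psi_collUnion hrect hA1 hB1 hK₀),
    internalRadiusTendstoZero_comp_add_iff (F := fun n ↦ Psi Mseq n ⁻¹' collUnion (𝓔 n))]
  rfl

/-- Hypothesis `B₄` holds if and only if `Ψ⁻¹(K)` has empty interior. -/
theorem hypB4_iff_empty_interior (d : ℕ) (M : Type*) [MetricSpace M] [CompactSpace M]
    [ChartedSpace (EuclideanSpace ℝ (Fin d)) M]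
    (R : M ≃ₜ M) (𝓔 : ℕ → Set (Set M)) (hrect : ∀ n, IsRectCollection d (𝓔 n))
    (hA1 : HypA1 R 𝓔) (hA3 : HypA3 R 𝓔) (hEdge : EdgelessGraph R (𝓔 0))
    (Mseq : ℕ → M ≃ₜ M)
    (hB1 : HypB1 R 𝓔 Mseq) (hB2 : HypB2 R 𝓔 Mseq) (hB3 : HypB3 R 𝓔 Mseq)
    (Ψ : M → M) (hΨc : Continuous Ψ)
    (hΨ : TendstoUniformly (fun n => ⇑(Psi Mseq n)) Ψ Filter.atTop) :
    HypB4 𝓔 Mseq ↔ interior (Ψ ⁻¹' limitK 𝓔) = ∅ :=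
  hypB4_iff_empty_interior_general d M R 𝓔 hrect hA1 hA3 Mseq hB1 Ψ hΨ

end
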